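/- In the 20-dimensional space S³(ℂ⁴) with the standard action of the Lie algebra 𝔟 of upper-triangular traceless 4×4 matrices, there is exactly one 𝔟-invariant subspace of dimension 1 (namely the span of e₁³), exactly one of dimension 2 (the span of {e₁³, e₁²e₂}), and exactly two of dimension 3 (the spans of {e₁³, e₁²e₂, e₁²e₃} and of {e₁³, e₁²e₂, e₁e₂²}). -/

import Mathlib

open scoped BigOperators

/-- Evaluation of a `3`-tensor at fixed indices, as a linear functional. -/
noncomputable def ev3 (i j k : Fin 4) : (Fin 4 → Fin 4 → Fin 4 → ℂ) →ₗ[ℂ] ℂ :=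
  (LinearMap.proj k) ∘ₗ (LinearMap.proj j) ∘ₗ (LinearMap.proj i)

/-- `S³(ℂ⁴)`: the symmetric tensors inside `(ℂ⁴)⊗³`. -/
noncomputable def Sym3 : Submodule ℂ (Fin 4 → Fin 4 → Fin 4 → ℂ) :=
  ⨅ p : Fin 4 × Fin 4 × Fin 4,
    LinearMap.ker (ev3 p.1 p.2.1 p.2.2 - ev3 p.2.1 p.1 p.2.2) ⊓
    LinearMap.ker (ev3 p.1 p.2.1 p.2.2 - ev3 p.1 p.2.2 p.2.1)

/-- The derivation action of a matrix `X ∈ 𝔤𝔩₄` on `(ℂ⁴)⊗³`: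
`X·(v₁⊗v₂⊗v₃) = Xv₁⊗v₂⊗v₃ + v₁⊗Xv₂⊗v₃ + v₁⊗v₂⊗Xv₃`, in coordinates. -/
noncomputable def der3 (X : Matrix (Fin 4) (Fin 4) ℂ) (T : Fin 4 → Fin 4 → Fin 4 → ℂ) :
    Fin 4 → Fin 4 → Fin 4 → ℂ :=
  fun i j k => (∑ a, X i a * T a j k) + (∑ a, X j a * T i a k) + (∑ a, X k a * T i j a)

/-- `X` lies in the Borel subalgebra `𝔟 ⊂ 𝔰𝔩₄` of upper-triangular traceless matrices. -/
def InBorel (X : Matrix (Fin 4) (Fin 4) ℂ) : Prop :=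
  (∀ i j : Fin 4, j < i → X i j = 0) ∧ Matrix.trace X = 0

/-- The (symmetric tensor corresponding to the) monomial `e₁³`. -/
def v300 : Fin 4 → Fin 4 → Fin 4 → ℂ :=
  fun i j k => if i = 0 ∧ j = 0 ∧ k = 0 then 1 else 0

/-- The monomial `e₁²e₂` as a symmetric tensor. -/
def v210 : Fin 4 → Fin 4 → Fin 4 → ℂ := fun i j k =>
  if (i = 0 ∧ j = 0 ∧ k = 1) ∨ (i = 0 ∧ j = 1 ∧ k = 0) ∨ (i = 1 ∧ j = 0 ∧ k = 0)
  then 1 else 0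

/-- The monomial `e₁²e₃` as a symmetric tensor. -/
def v201 : Fin 4 → Fin 4 → Fin 4 → ℂ := fun i j k =>
  if (i = 0 ∧ j = 0 ∧ k = 2) ∨ (i = 0 ∧ j = 2 ∧ k = 0) ∨ (i = 2 ∧ j = 0 ∧ k = 0)
  then 1 else 0

/-- The monomial `e₁e₂²` as a symmetric tensor. -/
def v120 : Fin 4 → Fin 4 → Fin 4 → ℂ := fun i j k =>
  if (i = 0 ∧ j = 1 ∧ k = 1) ∨ (i = 1 ∧ j = 0 ∧ k = 1) ∨ (i = 1 ∧ j = 1 ∧ k = 0)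
  then 1 else 0

/-!
The diagonal matrix `diag(25, 5, 1, -31)` lies in `𝔟` and has pairwise distinct eigenvalues on
the 20 monomials spanning `S³ℂ⁴`, so a `𝔟`-invariant subspace `W` is spanned by the monomials it
contains, and `dim W` is their number. The elementary matrix `E_ij` (`i < j`) sends a monomial
containing `e_j` to a nonzero multiple of the monomial with one `e_j` replaced by `e_i`; hence the
monomials in `W` form a set `S` closed under such replacements, and conversely the span of any
such `S` is `𝔟`-invariant. Every monomial other than `e₁³` can be lowered by one step in height
(the sum of its indices) by such a replacement, so `S` meets every height below its maximal one and
`|S| ≤ 3` forces `S` into the four monomials of height `≤ 2`; among those the closed sets of each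
size are found by enumeration.
-/

theorem Submodule.mem_of_sum_eigenvectors_mem {K M ι : Type*} [Field K] [AddCommGroup M]
    [Module K M] {p : Submodule K M} {f : Module.End K M} (hp : ∀ x ∈ p, f x ∈ p)
    {μ : ι → K} {s : Finset ι} (hμ : Set.InjOn μ s) {v : ι → M}
    (hv : ∀ i ∈ s, f (v i) = μ i • v i) (hsum : ∑ i ∈ s, v i ∈ p) : ∀ i ∈ s, v i ∈ p := by
  classical
  induction s using Finset.induction_on generalizing v with
  | empty => simp
  | insert j s hj ih =>
    rw [Finset.sum_insert hj] at hsum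
    -- applying `f - μ j` kills the summand `v j` and rescales the others
    have hdiff : ∑ i ∈ s, (μ i - μ j) • v i ∈ p := by
      have key : f (v j + ∑ i ∈ s, v i) - μ j • (v j + ∑ i ∈ s, v i)
          = ∑ i ∈ s, (μ i - μ j) • v i := by
        simp only [map_add, map_sum, hv j (Finset.mem_insert_self j s), smul_add,
          Finset.smul_sum, sub_smul, Finset.sum_sub_distrib]
        rw [Finset.sum_congr rfl fun i hi => hv i (Finset.mem_insert_of_mem hi)]
        abel
      exact key ▸ p.sub_mem (hp _ hsum) (p.smul_mem _ hsum)
    have hs : ∀ i ∈ s, v i ∈ p := by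
      intro i hi
      have hne : μ i - μ j ≠ 0 := sub_ne_zero.mpr fun h => hj <| by
        rwa [hμ (Finset.mem_insert_of_mem hi) (Finset.mem_insert_self j s) h] at hi
      have := ih (hμ.mono (by simp)) (v := fun i => (μ i - μ j) • v i)
        (fun i hi => by simp only [map_smul, hv i (Finset.mem_insert_of_mem hi), smul_comm (μ i)])
        hdiff i hi
      simpa [hne] using p.smul_mem (μ i - μ j)⁻¹ this
    intro i hi
    rcases Finset.mem_insert.mp hi with rfl | hi
    · simpa using p.sub_mem hsum (p.sum_mem hs)
    · exact hs i hi

namespace Sym3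

abbrev Tensor3 := Fin 4 → Fin 4 → Fin 4 → ℂ

noncomputable def der3Bilin : Matrix (Fin 4) (Fin 4) ℂ →ₗ[ℂ] Tensor3 →ₗ[ℂ] Tensor3 :=
  LinearMap.mk₂ ℂ der3
    (fun X Y T => by ext; simp only [der3, Matrix.add_apply, add_mul, Finset.sum_add_distrib,
      Pi.add_apply]; ring)
    (fun c X T => by ext; simp only [der3, Matrix.smul_apply, smul_eq_mul, mul_assoc,
      ← Finset.mul_sum, Pi.smul_apply]; ring)
    (fun X T U => by ext; simp only [der3, Pi.add_apply, mul_add, Finset.sum_add_distrib]; ring)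
    (fun c X T => by ext; simp only [der3, Pi.smul_apply, smul_eq_mul, mul_left_comm _ c,
      ← Finset.mul_sum]; ring)

@[simp] lemma der3Bilin_apply (X : Matrix (Fin 4) (Fin 4) ℂ) (T : Tensor3) :
    der3Bilin X T = der3 X T := rfl

lemma der3_eq_sum_single (X : Matrix (Fin 4) (Fin 4) ℂ) (T : Tensor3) :
    der3 X T = ∑ i, ∑ j, X i j • der3 (Matrix.single i j 1) T := by
  have hsingle : ∀ i j, Matrix.single i j (X i j) = X i j • Matrix.single i j (1 : ℂ) :=
    fun i j => by rw [Matrix.smul_single, smul_eq_mul, mul_one]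
  conv_lhs => rw [X.matrix_eq_sum_single]
  simp only [hsingle, ← der3Bilin_apply, map_sum, map_smul, LinearMap.sum_apply,
    LinearMap.smul_apply]

lemma der3_single_apply (i j : Fin 4) (T : Tensor3) (p q r : Fin 4) :
    der3 (Matrix.single i j 1) T p q r =
      (if i = p then T j q r else 0) + (if i = q then T p j r else 0) +
        (if i = r then T p q j else 0) := by
  simp [der3, Matrix.single_apply, ite_and]

lemma mem_Sym3_iff (T : Tensor3) :
    T ∈ Sym3 ↔ ∀ p q r : Fin 4, T p q r = T q p r ∧ T p q r = T p r q := by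
  simp [Sym3, Submodule.mem_iInf, ev3, sub_eq_zero]

abbrev Idx3 := Fin 4 × Fin 4 × Fin 4

def coeff (T : Tensor3) (t : Idx3) : ℂ := T t.1 t.2.1 t.2.2

def sort3 (t : Idx3) : Idx3 :=
  let (p, q, r) := t
  if p ≤ q then
    if q ≤ r then (p, q, r) else if p ≤ r then (p, r, q) else (r, p, q)
  else
    if p ≤ r then (q, p, r) else if q ≤ r then (q, r, p) else (r, q, p)

lemma sort3_sorted :
    ∀ t : Idx3, (sort3 t).1 ≤ (sort3 t).2.1 ∧ (sort3 t).2.1 ≤ (sort3 t).2.2 := by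
  decide

lemma sort3_of_sorted : ∀ t : Idx3, t.1 ≤ t.2.1 ∧ t.2.1 ≤ t.2.2 → sort3 t = t := by decide

lemma sort3_swap₁₂ : ∀ p q r : Fin 4, sort3 (p, q, r) = sort3 (q, p, r) := by decide

lemma sort3_swap₂₃ : ∀ p q r : Fin 4, sort3 (p, q, r) = sort3 (p, r, q) := by decide

lemma coeff_sort3 {T : Tensor3} (hT : T ∈ Sym3) (t : Idx3) : coeff T (sort3 t) = coeff T t := by
  obtain ⟨p, q, r⟩ := t
  have h := (mem_Sym3_iff T).mp hT
  have := (h p q r).1; have := (h p q r).2; have := (h q p r).2; have := (h p r q).1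
  have := (h r p q).2
  simp only [sort3, coeff]
  split_ifs <;> grind

/-- Degree-3 monomials in `e₁, …, e₄`, as sorted index triples. -/
abbrev Mono := {t : Idx3 // t.1 ≤ t.2.1 ∧ t.2.1 ≤ t.2.2}

def Mono.ofIdx (t : Idx3) : Mono := ⟨sort3 t, sort3_sorted t⟩

def Mono.tensor (m : Mono) : Tensor3 := fun p q r => if sort3 (p, q, r) = m.1 then 1 else 0

lemma Mono.coeff_tensor (m m' : Mono) : coeff m.tensor m'.1 = if m' = m then 1 else 0 := by
  simp [coeff, Mono.tensor, sort3_of_sorted _ m'.2, Subtype.ext_iff]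

lemma Mono.tensor_ne_zero (m : Mono) : m.tensor ≠ 0 := fun h => by
  simpa [h, coeff] using m.coeff_tensor m

lemma Mono.tensor_mem_Sym3 (m : Mono) : m.tensor ∈ Sym3 := by
  simp [mem_Sym3_iff, Mono.tensor, ← sort3_swap₁₂, ← sort3_swap₂₃]

lemma eq_sum_tensor {T : Tensor3} (hT : T ∈ Sym3) : T = ∑ m : Mono, coeff T m.1 • m.tensor := by
  ext p q r
  simp only [Finset.sum_apply, Pi.smul_apply, Mono.tensor, smul_eq_mul, mul_ite, mul_one,
    mul_zero]
  rw [Fintype.sum_eq_single (Mono.ofIdx (p, q, r)) fun m hm => if_neg fun h => hm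
    (Subtype.ext h.symm)]
  exact (if_pos rfl).trans (coeff_sort3 hT (p, q, r)) |>.symm

/-- Chosen so that `wt p + wt q + wt r` determines the multiset `{p, q, r}`, with total `0` so
that `diag wt` is traceless. -/
def wt : Fin 4 → ℤ := ![25, 5, 1, -31]

def weight (t : Idx3) : ℤ := wt t.1 + wt t.2.1 + wt t.2.2

lemma weight_sort3 : ∀ t : Idx3, weight (sort3 t) = weight t := by decide

lemma weight_injective : Function.Injective fun m : Mono => weight m.1 := by decide

noncomputable def cartan : Matrix (Fin 4) (Fin 4) ℂ := Matrix.diagonal fun i => (wt i : ℂ)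

lemma inBorel_cartan : InBorel cartan := by
  refine ⟨fun i j hji => Matrix.diagonal_apply_ne _ hji.ne', ?_⟩
  simp [cartan, Matrix.trace, Fin.sum_univ_four, wt]
  norm_num

lemma der3_cartan_apply (T : Tensor3) (p q r : Fin 4) :
    der3 cartan T p q r = weight (p, q, r) * T p q r := by
  simp [der3, cartan, Matrix.diagonal_apply, weight]
  ring

lemma der3_cartan_tensor (m : Mono) : der3 cartan m.tensor = (weight m.1 : ℂ) • m.tensor := by
  ext p q r
  rw [der3_cartan_apply, Pi.smul_apply, Pi.smul_apply, Pi.smul_apply, smul_eq_mul, Mono.tensor]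
  split_ifs with h
  · rw [← weight_sort3, h]
  · simp

lemma linearIndependent_tensor : LinearIndependent ℂ Mono.tensor :=
  Module.End.eigenvectors_linearIndependent' (der3Bilin cartan) _
    (Int.cast_injective.comp weight_injective) _
    fun m => ⟨Module.End.mem_eigenspace_iff.mpr (der3_cartan_tensor m), m.tensor_ne_zero⟩

noncomputable def spanOf (S : Finset Mono) : Submodule ℂ Tensor3 :=
  Submodule.span ℂ (Mono.tensor '' S)

lemma finrank_spanOf (S : Finset Mono) : Module.finrank ℂ (spanOf S) = S.card := by
  have hrange : spanOf S = Submodule.span ℂ (Set.range (Mono.tensor ∘ ((↑) : S → Mono))) := by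
    rw [Set.range_comp, Subtype.range_coe]
    rfl
  rw [hrange, finrank_span_eq_card
    (linearIndependent_tensor.comp ((↑) : S → Mono) Subtype.val_injective), Fintype.card_coe]

lemma spanOf_le_Sym3 (S : Finset Mono) : spanOf S ≤ Sym3 :=
  Submodule.span_le.mpr <| by rintro _ ⟨m, -, rfl⟩; exact m.tensor_mem_Sym3

open Classical in
noncomputable def support (W : Submodule ℂ Tensor3) : Finset Mono := {m | m.tensor ∈ W}

lemma mem_support {W : Submodule ℂ Tensor3} {m : Mono} : m ∈ support W ↔ m.tensor ∈ W := by
  simp [support]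

lemma eq_spanOf_support {W : Submodule ℂ Tensor3} (hW : W ≤ Sym3)
    (hcartan : ∀ T ∈ W, der3 cartan T ∈ W) : W = spanOf (support W) := by
  refine le_antisymm (fun T hT => ?_) (Submodule.span_le.mpr ?_)
  · have hT' := hW hT
    have hcomp : ∀ m : Mono, coeff T m.1 • m.tensor ∈ W :=
      fun m => Submodule.mem_of_sum_eigenvectors_mem (f := der3Bilin cartan) hcartan
        (Int.cast_injective.comp weight_injective).injOn
        (fun m _ => by simp [der3_cartan_tensor, smul_comm (coeff T m.1)])
        (eq_sum_tensor hT' ▸ hT) m (Finset.mem_univ m)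
    rw [eq_sum_tensor hT']
    refine Submodule.sum_mem _ fun m _ => ?_
    by_cases h0 : coeff T m.1 = 0
    · simp [h0]
    · exact Submodule.smul_mem _ _ <| Submodule.subset_span
        ⟨m, mem_support.mpr <| (W.smul_mem_iff h0).mp (hcomp m), rfl⟩
  · rintro _ ⟨m, hm, rfl⟩
    exact mem_support.mp hm

def count (i : Fin 4) (t : Idx3) : ℕ :=
  (if t.1 = i then 1 else 0) + (if t.2.1 = i then 1 else 0) + (if t.2.2 = i then 1 else 0)

def replace (i j : Fin 4) (t : Idx3) : Idx3 :=
  if t.1 = j then (i, t.2.1, t.2.2) else if t.2.1 = j then (t.1, i, t.2.2)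
  else if t.2.2 = j then (t.1, t.2.1, i) else t

def Mono.move (i j : Fin 4) (m : Mono) : Mono := .ofIdx (replace i j m.1)

-- The coefficient counts the positions holding `i` in an arrangement of the new monomial.
lemma count_tensor_single : ∀ (i j : Fin 4) (m : Mono) (p q r : Fin 4),
    ((if i = p ∧ sort3 (j, q, r) = m.1 then 1 else 0) +
      (if i = q ∧ sort3 (p, j, r) = m.1 then 1 else 0) +
      (if i = r ∧ sort3 (p, q, j) = m.1 then 1 else 0) : ℕ) =
    (if count j m.1 = 0 then 0 else count i (m.move i j).1) *
      (if sort3 (p, q, r) = (m.move i j).1 then 1 else 0) := by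
  decide

lemma der3_single_tensor (i j : Fin 4) (m : Mono) :
    der3 (Matrix.single i j 1) m.tensor =
      ((if count j m.1 = 0 then 0 else count i (m.move i j).1 : ℕ) : ℂ) •
        (m.move i j).tensor := by
  ext p q r
  have := congrArg (Nat.cast : ℕ → ℂ) (count_tensor_single i j m p q r)
  simp only [Nat.cast_add, Nat.cast_mul, Nat.cast_ite, Nat.cast_one, Nat.cast_zero] at this
  simpa only [der3_single_apply, Mono.tensor, Pi.smul_apply, smul_eq_mul, ite_and, Nat.cast_ite,
    Nat.cast_zero] using this

lemma inBorel_single {i j : Fin 4} (hij : i < j) : InBorel (Matrix.single i j 1) := by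
  refine ⟨fun a b hba => Matrix.single_apply_of_ne _ _ _ _ _ ?_,
    Matrix.trace_single_eq_of_ne _ _ _ hij.ne⟩
  rintro ⟨rfl, rfl⟩
  exact lt_asymm hij hba

def IsBorelInvariant (W : Submodule ℂ Tensor3) : Prop :=
  ∀ X, InBorel X → ∀ T ∈ W, der3 X T ∈ W

def IsLowerClosed (S : Finset Mono) : Prop :=
  ∀ m ∈ S, ∀ i j, i < j → count j m.1 ≠ 0 → m.move i j ∈ S

instance : DecidablePred IsLowerClosed := fun S => by unfold IsLowerClosed; infer_instance

lemma count_move_ne_zero : ∀ (i j : Fin 4) (m : Mono), count j m.1 ≠ 0 →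
    count i (m.move i j).1 ≠ 0 := by
  decide

lemma move_self : ∀ (i : Fin 4) (m : Mono), m.move i i = m := by decide

lemma isLowerClosed_support {W : Submodule ℂ Tensor3} (hW : IsBorelInvariant W) :
    IsLowerClosed (support W) := by
  intro m hm i j hij hj
  have h := hW _ (inBorel_single hij) _ (mem_support.mp hm)
  rw [der3_single_tensor, if_neg hj] at h
  have hcoeff : (count i (m.move i j).1 : ℂ) ≠ 0 :=
    Nat.cast_ne_zero.mpr (count_move_ne_zero i j m hj)
  exact mem_support.mpr <| (W.smul_mem_iff hcoeff).mp h

lemma isBorelInvariant_spanOf {S : Finset Mono} (hS : IsLowerClosed S) :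
    IsBorelInvariant (spanOf S) := by
  intro X hX
  suffices spanOf S ≤ (spanOf S).comap (der3Bilin X) from fun T hT => this hT
  refine Submodule.span_le.mpr ?_
  rintro _ ⟨m, hm, rfl⟩
  change der3 X m.tensor ∈ spanOf S
  rw [der3_eq_sum_single]
  refine Submodule.sum_mem _ fun i _ => Submodule.sum_mem _ fun j _ => ?_
  rcases lt_trichotomy j i with hji | rfl | hij
  · simp [hX.1 i j hji]
  · rw [der3_single_tensor, move_self]
    exact Submodule.smul_mem _ _ <| Submodule.smul_mem _ _ <|
      Submodule.subset_span ⟨m, hm, rfl⟩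
  · rw [der3_single_tensor]
    split_ifs with hj
    · simp
    · exact Submodule.smul_mem _ _ <| Submodule.smul_mem _ _ <|
        Submodule.subset_span ⟨_, hS m hm i j hij hj, rfl⟩

theorem setOf_isBorelInvariant_finrank (k : ℕ) :
    {W : Submodule ℂ Tensor3 | W ≤ Sym3 ∧ (∀ X, InBorel X → ∀ T ∈ W, der3 X T ∈ W) ∧
      Module.finrank ℂ W = k} = spanOf '' {S | IsLowerClosed S ∧ S.card = k} := by
  ext W
  constructor
  · rintro ⟨hW, hinv, rfl⟩
    have hspan := eq_spanOf_support hW (hinv _ inBorel_cartan)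
    refine ⟨support W, ⟨isLowerClosed_support hinv, ?_⟩, hspan.symm⟩
    rw [← finrank_spanOf, ← hspan]
  · rintro ⟨S, ⟨hS, rfl⟩, rfl⟩
    exact ⟨spanOf_le_Sym3 S, isBorelInvariant_spanOf hS, finrank_spanOf S⟩

def height (t : Idx3) : ℕ := t.1.val + t.2.1.val + t.2.2.val

lemma exists_move_height_succ : ∀ m : Mono, height m.1 ≠ 0 →
    ∃ i j, i < j ∧ count j m.1 ≠ 0 ∧ height (m.move i j).1 + 1 = height m.1 := by
  decide

lemma range_subset_image_height {S : Finset Mono} (hS : IsLowerClosed S) (n : ℕ) :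
    ∀ m ∈ S, height m.1 = n → Finset.range (n + 1) ⊆ S.image (height ∘ Subtype.val) := by
  induction n with
  | zero =>
    intro m hm hm0
    rw [Finset.range_one, Finset.singleton_subset_iff]
    exact Finset.mem_image.mpr ⟨m, hm, hm0⟩
  | succ n ih =>
    intro m hm hmn
    obtain ⟨i, j, hij, hj, hmove⟩ := exists_move_height_succ m (by omega)
    rw [Finset.range_add_one, Finset.insert_subset_iff]
    exact ⟨Finset.mem_image.mpr ⟨m, hm, hmn⟩, ih _ (hS m hm i j hij hj) (by omega)⟩

lemma height_lt_card {S : Finset Mono} (hS : IsLowerClosed S) {m : Mono} (hm : m ∈ S) :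
    height m.1 < S.card :=
  calc height m.1 < (Finset.range (height m.1 + 1)).card := by simp
    _ ≤ (S.image (height ∘ Subtype.val)).card :=
      Finset.card_le_card (range_subset_image_height hS _ m hm rfl)
    _ ≤ S.card := Finset.card_image_le

def m300 : Mono := ⟨(0, 0, 0), by decide⟩
def m210 : Mono := ⟨(0, 0, 1), by decide⟩
def m201 : Mono := ⟨(0, 0, 2), by decide⟩
def m120 : Mono := ⟨(0, 1, 1), by decide⟩

lemma mem_of_height_lt_three :
    ∀ m : Mono, height m.1 < 3 → m ∈ ({m300, m210, m201, m120} : Finset Mono) := by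
  decide

lemma setOf_isLowerClosed_card {k : ℕ} (hk : k ≤ 3) :
    {S | IsLowerClosed S ∧ S.card = k} =
      ↑(({m300, m210, m201, m120} : Finset Mono).powerset.filter
        fun S => IsLowerClosed S ∧ S.card = k) := by
  ext S
  simp only [Set.mem_ofPred_eq, Finset.coe_filter, Finset.mem_powerset]
  refine ⟨fun ⟨hS, hcard⟩ => ⟨fun m hm => mem_of_height_lt_three m ?_, hS, hcard⟩, And.right⟩
  have := height_lt_card hS hm
  omega

lemma lowerClosed_card_one : ({m300, m210, m201, m120} : Finset Mono).powerset.filter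
    (fun S => IsLowerClosed S ∧ S.card = 1) = {{m300}} := by decide

lemma lowerClosed_card_two : ({m300, m210, m201, m120} : Finset Mono).powerset.filter
    (fun S => IsLowerClosed S ∧ S.card = 2) = {{m300, m210}} := by decide

lemma lowerClosed_card_three : ({m300, m210, m201, m120} : Finset Mono).powerset.filter
    (fun S => IsLowerClosed S ∧ S.card = 3) = {{m300, m210, m201}, {m300, m210, m120}} := by
  decide

lemma Mono.tensor_eq_ite {m : Mono} {P : Fin 4 → Fin 4 → Fin 4 → Prop}
    [∀ p q r, Decidable (P p q r)] (h : ∀ p q r, sort3 (p, q, r) = m.1 ↔ P p q r) :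
    m.tensor = fun p q r => if P p q r then 1 else 0 :=
  funext fun p => funext fun q => funext fun r => if_congr (h p q r) rfl rfl

lemma tensor_m300 : m300.tensor = v300 := Mono.tensor_eq_ite (by decide)

lemma tensor_m210 : m210.tensor = v210 := Mono.tensor_eq_ite (by decide)

lemma tensor_m201 : m201.tensor = v201 := Mono.tensor_eq_ite (by decide)

lemma tensor_m120 : m120.tensor = v120 := Mono.tensor_eq_ite (by decide)

lemma spanOf_ne : spanOf {m300, m210, m201} ≠ spanOf {m300, m210, m120} := by
  intro h
  refine linearIndependent_tensor.notMem_span_image (s := ↑({m300, m210, m120} : Finset Mono))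
    (x := m201) (by decide) ?_
  change m201.tensor ∈ spanOf _
  rw [← h]
  exact Submodule.subset_span ⟨m201, by simp, rfl⟩

end Sym3

/-- In `S³(ℂ⁴)` with the `𝔟`-action by derivations, there is exactly one `𝔟`-invariant
subspace of dimension `1` (the span of `e₁³`), exactly one of dimension `2` (the span of
`{e₁³, e₁²e₂}`), and exactly two of dimension `3` (the spans of `{e₁³, e₁²e₂, e₁²e₃}` and
of `{e₁³, e₁²e₂, e₁e₂²}`). -/
theorem borel_invariant_subspaces_S3 :
    ({W : Submodule ℂ (Fin 4 → Fin 4 → Fin 4 → ℂ) | W ≤ Sym3 ∧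
        (∀ X, InBorel X → ∀ T ∈ W, der3 X T ∈ W) ∧ Module.finrank ℂ W = 1}
      = {Submodule.span ℂ {v300}}) ∧
    ({W : Submodule ℂ (Fin 4 → Fin 4 → Fin 4 → ℂ) | W ≤ Sym3 ∧
        (∀ X, InBorel X → ∀ T ∈ W, der3 X T ∈ W) ∧ Module.finrank ℂ W = 2}
      = {Submodule.span ℂ {v300, v210}}) ∧
    ({W : Submodule ℂ (Fin 4 → Fin 4 → Fin 4 → ℂ) | W ≤ Sym3 ∧
        (∀ X, InBorel X → ∀ T ∈ W, der3 X T ∈ W) ∧ Module.finrank ℂ W = 3}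
      = {Submodule.span ℂ {v300, v210, v201}, Submodule.span ℂ {v300, v210, v120}}) ∧
    Submodule.span ℂ {v300, v210, v201} ≠ Submodule.span ℂ ({v300, v210, v120} :
      Set (Fin 4 → Fin 4 → Fin 4 → ℂ)) := by
  simp only [Sym3.setOf_isBorelInvariant_finrank,
    Sym3.setOf_isLowerClosed_card (by norm_num : 1 ≤ 3),
    Sym3.setOf_isLowerClosed_card (by norm_num : 2 ≤ 3), Sym3.setOf_isLowerClosed_card le_rfl,
    Sym3.lowerClosed_card_one, Sym3.lowerClosed_card_two, Sym3.lowerClosed_card_three]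
  simpa only [Sym3.spanOf, Finset.coe_insert, Finset.coe_singleton, Set.image_insert_eq,
    Set.image_singleton, Sym3.tensor_m300, Sym3.tensor_m210, Sym3.tensor_m201, Sym3.tensor_m120,
    true_and] using Sym3.spanOf_ne
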